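/- arXiv:2012.08324 — 2 statements merged into one kernel-verified Lean document; each statement's English description precedes it below -/
import Mathlib

section
/- If a 2-copula C satisfies (D * C)(u,v) ≤ C(u,v) for every 2-copula D and all u,v ∈ [0,1], then C is stochastically increasing in the first component, i.e. u ↦ C(u,v) is concave for each v ∈ [0,1]. -/
open MeasureTheory Set Filter

def IsCopula (C : ℝ → ℝ → ℝ) : Prop :=
  (∀ u ∈ Icc (0:ℝ) 1, C u 0 = 0 ∧ C u 1 = u) ∧
  (∀ v ∈ Icc (0:ℝ) 1, C 0 v = 0 ∧ C 1 v = v) ∧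
  (∀ u₁ u₂ v₁ v₂ : ℝ, u₁ ∈ Icc (0:ℝ) 1 → u₂ ∈ Icc (0:ℝ) 1 →
    v₁ ∈ Icc (0:ℝ) 1 → v₂ ∈ Icc (0:ℝ) 1 → u₁ ≤ u₂ → v₁ ≤ v₂ →
    0 ≤ C u₂ v₂ - C u₂ v₁ - C u₁ v₂ + C u₁ v₁)

/-- Markov product of two copulas: (C₁ * C₂)(u,v) = ∫₀¹ ∂₂C₁(u,t) ∂₁C₂(t,v) dt. -/
noncomputable def MarkovProduct (C₁ C₂ : ℝ → ℝ → ℝ) (u v : ℝ) : ℝ :=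
  ∫ t in (0:ℝ)..1, deriv (fun s => C₁ u s) t * deriv (fun s => C₂ s v) t

/-- Stochastically increasing in the first component: u ↦ C(u,v) is concave for each v. -/
def StochIncr (C : ℝ → ℝ → ℝ) : Prop :=
  ∀ v ∈ Icc (0:ℝ) 1, ConcaveOn ℝ (Icc (0:ℝ) 1) (fun u => C u v)

/-- Stochastically decreasing in the first component: u ↦ C(u,v) is convex for each v. -/
def StochDecr (C : ℝ → ℝ → ℝ) : Prop :=
  ∀ v ∈ Icc (0:ℝ) 1, ConvexOn ℝ (Icc (0:ℝ) 1) (fun u => C u v)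

/-!
Test the hypothesis against the ordinal sum `D` of `C⁻` on `[a, b]²`. For `x ∈ [a, b]`, the
derivative `∂₂D(x, ·)` is the indicator of `(0, a) ∪ (a + b - x, b)`, so by the fundamental theorem
of calculus for the Lipschitz (hence absolutely continuous) sections of `C`,
`(D * C)(x, v) = C(a, v) + C(b, v) - C(a + b - x, v)`. At the midpoint `x = (a + b) / 2` the
hypothesis becomes midpoint concavity of `u ↦ C(u, v)`, which for a continuous function is
concavity.
-/

open Topology

def TwoIncreasing (F : ℝ → ℝ → ℝ) : Prop :=
  ∀ ⦃x₁ x₂ y₁ y₂ : ℝ⦄, x₁ ≤ x₂ → y₁ ≤ y₂ → 0 ≤ F x₂ y₂ - F x₂ y₁ - F x₁ y₂ + F x₁ y₁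

namespace TwoIncreasing

variable {F G : ℝ → ℝ → ℝ}

theorem add (hF : TwoIncreasing F) (hG : TwoIncreasing G) :
    TwoIncreasing (fun x y => F x y + G x y) := fun _ _ _ _ hx hy => by
  linarith [hF hx hy, hG hx hy]

theorem comp (hF : TwoIncreasing F) {f g : ℝ → ℝ} (hf : Monotone f) (hg : Monotone g) :
    TwoIncreasing (fun x y => F (f x) (g y)) := fun _ _ _ _ hx hy => hF (hf hx) (hg hy)

end TwoIncreasing

theorem twoIncreasing_min : TwoIncreasing min := fun x₁ x₂ y₁ y₂ hx hy => by
  simp only [min_def]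
  split_ifs <;> linarith

theorem twoIncreasing_max_zero_add_sub (c : ℝ) :
    TwoIncreasing (fun x y => max 0 (x + y - c)) := fun x₁ x₂ y₁ y₂ hx hy => by
  simp only [max_def]
  split_ifs <;> linarith

namespace IsCopula

variable {C : ℝ → ℝ → ℝ} {v x y : ℝ}

theorem sub_mem_Icc_left (hC : IsCopula C) (hv : v ∈ Icc (0:ℝ) 1) (hx : x ∈ Icc (0:ℝ) 1)
    (hy : y ∈ Icc (0:ℝ) 1) (hxy : x ≤ y) : C y v - C x v ∈ Icc 0 (y - x) := by
  obtain ⟨hbot, -, hrect⟩ := hC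
  have hlow := hrect x y 0 v hx hy (by simp) hv hxy hv.1
  have hupp := hrect x y v 1 hx hy hv (by simp) hxy hv.2
  rw [(hbot x hx).1, (hbot y hy).1] at hlow
  rw [(hbot x hx).2, (hbot y hy).2] at hupp
  constructor <;> linarith

theorem lipschitzOnWith_left (hC : IsCopula C) (hv : v ∈ Icc (0:ℝ) 1) :
    LipschitzOnWith 1 (fun u => C u v) (Icc 0 1) := by
  refine LipschitzOnWith.of_le_add_mul 1 fun x hx y hy => ?_
  rw [NNReal.coe_one, one_mul, Real.dist_eq]
  rcases le_total x y with hxy | hyx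
  · linarith [(hC.sub_mem_Icc_left hv hx hy hxy).1, abs_nonneg (x - y)]
  · linarith [(hC.sub_mem_Icc_left hv hy hx hyx).2, le_abs_self (x - y)]

theorem absolutelyContinuousOnInterval_left (hC : IsCopula C) (hv : v ∈ Icc (0:ℝ) 1)
    (hx : x ∈ Icc (0:ℝ) 1) (hy : y ∈ Icc (0:ℝ) 1) :
    AbsolutelyContinuousOnInterval (fun u => C u v) x y :=
  ((hC.lipschitzOnWith_left hv).mono (uIcc_subset_Icc hx hy)).absolutelyContinuousOnInterval

end IsCopula

/-- The ordinal sum of `C⁻` on `[a, b]²`, i.e. `C⁺` with the square `[a, b]²` replaced by a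
rescaled `C⁻`, written as the sum of the distribution functions of its mass on `[0, a]²`,
`[a, b]²` and `[b, 1]²`. -/
noncomputable def ordinalSumW (a b u t : ℝ) : ℝ :=
  min (min a u) (min a t) + max 0 (max a (min b u) + max a (min b t) - (a + b)) +
    min (max b u - b) (max b t - b)

section ordinalSumW

variable {a b : ℝ}

theorem ordinalSumW_comm (u t : ℝ) : ordinalSumW a b u t = ordinalSumW a b t u := by
  simp only [ordinalSumW, min_comm, add_comm (max a (min b u))]

theorem twoIncreasing_ordinalSumW : TwoIncreasing (ordinalSumW a b) := by
  have hclamp : Monotone fun u : ℝ => max a (min b u) := fun _ _ h =>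
    max_le_max le_rfl (min_le_min le_rfl h)
  have hlow : Monotone fun u : ℝ => min a u := fun _ _ h => min_le_min le_rfl h
  have hhigh : Monotone fun u : ℝ => max b u - b := fun _ _ h =>
    sub_le_sub_right (max_le_max le_rfl h) b
  exact ((twoIncreasing_min.comp hlow hlow).add
    ((twoIncreasing_max_zero_add_sub (a + b)).comp hclamp hclamp)).add
    (twoIncreasing_min.comp hhigh hhigh)

theorem ordinalSumW_zero_right (ha : 0 ≤ a) (hab : a ≤ b) {u : ℝ} (hu : u ∈ Icc (0:ℝ) 1) :
    ordinalSumW a b u 0 = 0 := by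
  obtain ⟨hu0, hu1⟩ := hu
  simp only [ordinalSumW, min_def, max_def]
  split_ifs <;> linarith

theorem ordinalSumW_one_right (hab : a ≤ b) (hb : b ≤ 1) {u : ℝ} (hu : u ∈ Icc (0:ℝ) 1) :
    ordinalSumW a b u 1 = u := by
  obtain ⟨hu0, hu1⟩ := hu
  simp only [ordinalSumW, min_def, max_def]
  split_ifs <;> linarith

theorem isCopula_ordinalSumW (ha : 0 ≤ a) (hab : a ≤ b) (hb : b ≤ 1) :
    IsCopula (ordinalSumW a b) := by
  refine ⟨fun u hu => ⟨ordinalSumW_zero_right ha hab hu, ordinalSumW_one_right hab hb hu⟩,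
    fun t ht => ?_, fun _ _ _ _ _ _ _ _ hu hv => twoIncreasing_ordinalSumW hu hv⟩
  rw [ordinalSumW_comm, ordinalSumW_comm 1]
  exact ⟨ordinalSumW_zero_right ha hab ht, ordinalSumW_one_right hab hb ht⟩

theorem ordinalSumW_of_mem_Icc {x : ℝ} (hx : x ∈ Icc a b) (t : ℝ) :
    ordinalSumW a b x t = min a t + max 0 (x + max a (min b t) - (a + b)) := by
  obtain ⟨hax, hxb⟩ := hx
  have hbt : 0 ≤ max b t - b := by linarith [le_max_left b t]
  simp only [ordinalSumW, min_eq_left hax, min_eq_right hxb, max_eq_right hax,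
    max_eq_left hxb, sub_self, min_eq_left hbt, inf_left_idem, add_zero]

theorem deriv_ordinalSumW_right {x t : ℝ} (hx : x ∈ Icc a b) (hta : t ≠ a)
    (htc : t ≠ a + b - x) (htb : t ≠ b) :
    deriv (fun s => ordinalSumW a b x s) t =
      if t < a ∨ (a + b - x < t ∧ t < b) then 1 else 0 := by
  obtain ⟨hax, hxb⟩ := hx
  simp only [ordinalSumW_of_mem_Icc ⟨hax, hxb⟩]
  have affine : ∀ (U : Set ℝ) (α β : ℝ), U ∈ 𝓝 t →
      (∀ s ∈ U, min a s + max 0 (x + max a (min b s) - (a + b)) = α * s + β) →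
      deriv (fun s => min a s + max 0 (x + max a (min b s) - (a + b))) t = α := by
    intro U α β hU heq
    rw [Filter.EventuallyEq.deriv_eq (f := fun s => α * s + β) (Filter.eventually_of_mem hU heq)]
    simp
  rcases hta.lt_or_gt with hta | hta
  · rw [if_pos (Or.inl hta), affine (Iio a) 1 0 (Iio_mem_nhds hta) fun s hs => ?_]
    simp only [mem_Iio] at hs
    simp only [min_def, max_def]
    split_ifs <;> linarith
  rcases htc.lt_or_gt with htc | htc
  · rw [if_neg (by rintro (h | h) <;> linarith), affine (Ioo a (a + b - x)) 0 a
      (Ioo_mem_nhds hta htc) fun s hs => ?_]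
    obtain ⟨hs1, hs2⟩ := hs
    simp only [min_def, max_def]
    split_ifs <;> linarith
  rcases htb.lt_or_gt with htb | htb
  · rw [if_pos (Or.inr ⟨htc, htb⟩), affine (Ioo (a + b - x) b) 1 (x - b)
      (Ioo_mem_nhds htc htb) fun s hs => ?_]
    obtain ⟨hs1, hs2⟩ := hs
    simp only [min_def, max_def]
    split_ifs <;> linarith
  · rw [if_neg (by rintro (h | h) <;> linarith), affine (Ioi b) 0 x
      (Ioi_mem_nhds htb) fun s hs => ?_]
    simp only [mem_Ioi] at hs
    simp only [min_def, max_def]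
    split_ifs <;> linarith

end ordinalSumW

theorem intervalIntegral_indicator_Ioc_union_Ioc {g : ℝ → ℝ} {p a c b q : ℝ} (hpa : p ≤ a)
    (hac : a ≤ c) (hcb : c ≤ b) (hbq : b ≤ q) (hg : IntervalIntegrable g volume p q) :
    ∫ t in p..q, (Ioc p a ∪ Ioc c b).indicator g t = (∫ t in p..a, g t) + ∫ t in c..b, g t := by
  have hsub : Ioc p a ∪ Ioc c b ⊆ Ioc p q :=
    union_subset (Ioc_subset_Ioc_right (by linarith)) (Ioc_subset_Ioc (by linarith) hbq)
  have hpq : p ≤ q := by linarith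
  rw [intervalIntegral.integral_of_le hpq, setIntegral_indicator (by measurability),
    inter_eq_self_of_subset_right hsub,
    setIntegral_union (Ioc_disjoint_Ioc_of_le hac) measurableSet_Ioc
      (hg.1.mono_set (hsub.trans' subset_union_left))
      (hg.1.mono_set (hsub.trans' subset_union_right)),
    intervalIntegral.integral_of_le hpa, intervalIntegral.integral_of_le hcb]

theorem markovProduct_ordinalSumW {C : ℝ → ℝ → ℝ} (hC : IsCopula C) {a b x v : ℝ}
    (hv : v ∈ Icc (0:ℝ) 1) (ha : 0 ≤ a) (hax : a ≤ x) (hxb : x ≤ b) (hb : b ≤ 1) :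
    MarkovProduct (ordinalSumW a b) C x v = C a v + C b v - C (a + b - x) v := by
  set c := a + b - x
  have hAC : ∀ p ∈ Icc (0:ℝ) 1, ∀ q ∈ Icc (0:ℝ) 1,
      AbsolutelyContinuousOnInterval (fun s => C s v) p q :=
    fun _ hp _ hq => hC.absolutelyContinuousOnInterval_left hv hp hq
  have h0 : (0:ℝ) ∈ Icc (0:ℝ) 1 := ⟨le_rfl, zero_le_one⟩
  have hint : ∀ᵐ t, t ∈ uIoc (0:ℝ) 1 →
      deriv (fun s => ordinalSumW a b x s) t * deriv (fun s => C s v) t =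
        (Ioc 0 a ∪ Ioc c b).indicator (deriv fun s => C s v) t := by
    have hfin : ({a, c, b} : Set ℝ).Countable := by simp
    filter_upwards [hfin.ae_notMem volume] with t ht ht01
    simp only [mem_insert_iff, mem_singleton_iff, not_or] at ht
    obtain ⟨hta, htc, htb⟩ := ht
    rw [uIoc_of_le zero_le_one] at ht01
    rw [deriv_ordinalSumW_right ⟨hax, hxb⟩ hta htc htb]
    split_ifs with hcond
    · rw [one_mul, indicator_of_mem]
      rcases hcond with h | h
      · exact Or.inl ⟨ht01.1, h.le⟩
      · exact Or.inr ⟨h.1, h.2.le⟩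
    · rw [zero_mul, indicator_of_notMem]
      rintro (h | h)
      · exact hcond (Or.inl (lt_of_le_of_ne h.2 hta))
      · exact hcond (Or.inr ⟨h.1, lt_of_le_of_ne h.2 htb⟩)
  rw [MarkovProduct, intervalIntegral.integral_congr_ae hint,
    intervalIntegral_indicator_Ioc_union_Ioc ha (by linarith) (by linarith) hb
      (hAC 0 h0 1 ⟨zero_le_one, le_rfl⟩).intervalIntegrable_deriv,
    (hAC 0 h0 a ⟨ha, by linarith⟩).integral_deriv_eq_sub,
    (hAC c ⟨by linarith, by linarith⟩ b ⟨by linarith, hb⟩).integral_deriv_eq_sub,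
    (hC.2.1 v hv).1]
  ring

theorem nonneg_of_midpoint_le {u : ℝ → ℝ} {p q : ℝ} (hu : ContinuousOn u (Icc p q))
    (hp : 0 ≤ u p) (hq : 0 ≤ u q)
    (hmid : ∀ x ∈ Icc p q, ∀ y ∈ Icc p q, x ≤ y → u x + u y ≤ 2 * u ((x + y) / 2)) :
    ∀ t ∈ Icc p q, 0 ≤ u t := by
  intro t ht
  obtain ⟨t₀, ⟨hpt₀, ht₀q⟩, hmin⟩ := isCompact_Icc.exists_isMinOn ⟨t, ht⟩ hu
  -- The points `t₀ ∓ δ` are minimisers too, and one of them is an endpoint.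
  set δ := min (t₀ - p) (q - t₀) with hδ_def
  have hδ : 0 ≤ δ := le_min (by linarith) (by linarith)
  have hl : t₀ - δ ∈ Icc p q := ⟨by linarith [min_le_left (t₀ - p) (q - t₀)], by linarith⟩
  have hr : t₀ + δ ∈ Icc p q := ⟨by linarith, by linarith [min_le_right (t₀ - p) (q - t₀)]⟩
  have hsum := hmid _ hl _ hr (by linarith)
  rw [show (t₀ - δ + (t₀ + δ)) / 2 = t₀ by ring] at hsum
  have hu₀ : 0 ≤ u t₀ := by
    rcases min_choice (t₀ - p) (q - t₀) with h | h
    · rw [show t₀ - δ = p by rw [hδ_def, h]; ring] at hsum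
      linarith [isMinOn_iff.mp hmin _ hr]
    · rw [show t₀ + δ = q by rw [hδ_def, h]; ring] at hsum
      linarith [isMinOn_iff.mp hmin _ hl]
  exact hu₀.trans (isMinOn_iff.mp hmin t ht)

theorem concaveOn_of_midpoint_le {s : Set ℝ} {f : ℝ → ℝ} (hs : Convex ℝ s)
    (hf : ContinuousOn f s)
    (hmid : ∀ x ∈ s, ∀ y ∈ s, x ≤ y → f x + f y ≤ 2 * f ((x + y) / 2)) : ConcaveOn ℝ s f := by
  refine LinearOrder.concaveOn_of_lt hs fun p hp q hq hpq α β hα hβ hαβ => ?_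
  have hsub : Icc p q ⊆ s := hs.ordConnected.out hp hq
  set L : ℝ → ℝ := fun t => f p + (t - p) / (q - p) * (f q - f p)
  have hL : ∀ x y, L x + L y = 2 * L ((x + y) / 2) := fun x y => by simp only [L]; ring
  have hnonneg := nonneg_of_midpoint_le (u := fun t => f t - L t) (p := p) (q := q)
    ((hf.mono hsub).sub (by fun_prop)) (by simp [L]) (by simp [L, (sub_pos.2 hpq).ne'])
    fun x hx y hy hxy => by linarith [hmid x (hsub hx) y (hsub hy) hxy, hL x y]
    (α • p + β • q) (convex_Icc p q ⟨le_rfl, hpq.le⟩ ⟨hpq.le, le_rfl⟩ hα.le hβ.le hαβ)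
  have hchord : L (α • p + β • q) = α • f p + β • f q := by
    simp only [L, smul_eq_mul]
    rw [show α = 1 - β by linarith]
    field_simp [(sub_pos.2 hpq).ne']
    ring
  linarith

theorem stochIncr_of_markovProduct_le (C : ℝ → ℝ → ℝ) (hC : IsCopula C)
    (h : ∀ D : ℝ → ℝ → ℝ, IsCopula D →
      ∀ u ∈ Icc (0:ℝ) 1, ∀ v ∈ Icc (0:ℝ) 1, MarkovProduct D C u v ≤ C u v) :
    StochIncr C := by
  intro v hv
  refine concaveOn_of_midpoint_le (convex_Icc 0 1) (hC.lipschitzOnWith_left hv).continuousOn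
    fun x hx y hy hxy => ?_
  have hm : (x + y) / 2 ∈ Icc x y := ⟨by linarith, by linarith⟩
  have key := h _ (isCopula_ordinalSumW hx.1 hxy hy.2) _
    ⟨hx.1.trans hm.1, hm.2.trans hy.2⟩ v hv
  rw [markovProduct_ordinalSumW hC hv hx.1 hm.1 hm.2 hy.2,
    show x + y - (x + y) / 2 = (x + y) / 2 by ring] at key
  linarith
end

section
/- The product copula Π(u,v) = uv is the only idempotent 2-copula that is stochastically decreasing in the first component. That is, if C is a 2-copula with C * C = C (Markov product) and u ↦ C(u,v) is convex for each v ∈ [0,1], then C(u,v) = uv. -/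
/-!
Convexity of `C(·, v)` between `C(0, v) = 0` and `C(1, v) = v` gives `C ≤ Π`. For the reverse
inequality put `f = ∂₂C(u, ·)` and `g = ∂₁C(·, v)`. Idempotence at `(u, 1)`, `(1, v)` and `(u, v)`
gives `∫ f = u`, `∫ g = v` and `∫ f g = C(u, v)`. Since `∫₀^τ f ≤ C(u, τ) ≤ u τ`, the function
`f - u` has nonnegative integral over every tail `(τ, 1)`. Convexity makes `g` a.e. equal to a
nondecreasing function with values in `[0, 1]`, whose superlevel sets are a.e. tails, so
writing `g` as the integral of its superlevel indicators (Fubini) gives `∫ (f - u) g ≥ 0`,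
that is `C(u, v) ≥ u v`.
-/

open MeasureTheory Set Filter

open scoped Topology

lemma derivWithin_mem_Icc_of_monotoneOn {φ : ℝ → ℝ} {s : Set ℝ} {x : ℝ} (hφ : MonotoneOn φ s)
    (hφ' : MonotoneOn (fun y => y - φ y) s) (hs : UniqueDiffWithinAt ℝ s x) :
    derivWithin φ s x ∈ Icc 0 1 := by
  refine ⟨hφ.derivWithin_nonneg, ?_⟩
  by_cases hd : DifferentiableWithinAt ℝ φ s x
  · have h := hφ'.derivWithin_nonneg (x := x)
    rw [derivWithin_fun_sub differentiableWithinAt_fun_id hd, derivWithin_id' _ _ hs] at h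
    linarith
  · rw [derivWithin_zero_of_not_differentiableWithinAt hd]
    exact zero_le_one

lemma deriv_mem_Icc_of_monotoneOn {φ : ℝ → ℝ} {s : Set ℝ} {x : ℝ} (hφ : MonotoneOn φ s)
    (hφ' : MonotoneOn (fun y => y - φ y) s) (hs : s ∈ 𝓝 x) : deriv φ x ∈ Icc 0 1 :=
  derivWithin_of_mem_nhds (f := φ) hs ▸
    derivWithin_mem_Icc_of_monotoneOn hφ hφ' (uniqueDiffWithinAt_of_mem_nhds hs)

lemma rightDeriv_mem_Icc_of_monotoneOn {φ : ℝ → ℝ} {s : Set ℝ} {x : ℝ} (hφ : MonotoneOn φ s)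
    (hφ' : MonotoneOn (fun y => y - φ y) s) (hs : s ∈ 𝓝 x) :
    derivWithin φ (Ioi x) x ∈ Icc 0 1 :=
  derivWithin_inter (f := φ) hs ▸ derivWithin_mem_Icc_of_monotoneOn (hφ.mono inter_subset_right)
    (hφ'.mono inter_subset_right) ((uniqueDiffWithinAt_Ioi x).inter hs)

lemma MonotoneOn.ae_deriv_eq_rightDeriv {φ : ℝ → ℝ} {s : Set ℝ} (hφ : MonotoneOn φ s)
    (hs : IsOpen s) : ∀ᵐ t ∂(volume.restrict s), deriv φ t = derivWithin φ (Ioi t) t := by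
  filter_upwards [hφ.ae_differentiableWithinAt hs.measurableSet,
    ae_restrict_mem hs.measurableSet] with t hd ht
  exact ((hd.differentiableAt (hs.mem_nhds ht)).derivWithin (uniqueDiffWithinAt_Ioi t)).symm

lemma MonotoneOn.exists_superlevel_ae_eq_Ioo {g : ℝ → ℝ} {a b : ℝ}
    (hg : MonotoneOn g (Ioo a b)) (hab : a ≤ b) (c : ℝ) :
    ∃ τ ∈ Icc a b, (Ioo a b ∩ {t | c < g t} : Set ℝ) =ᵐ[volume] Ioo τ b := by
  set S := Ioo a b ∩ {t | c < g t}
  rcases S.eq_empty_or_nonempty with hS | hS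
  · exact ⟨b, right_mem_Icc.2 hab, by rw [hS, Ioo_self]; rfl⟩
  have hbdd : BddBelow S := ⟨a, fun t ht => ht.1.1.le⟩
  have haτ : a ≤ sInf S := le_csInf hS fun t ht => ht.1.1.le
  have hS_sub : S ⊆ Ico (sInf S) b := fun t ht => ⟨csInf_le hbdd ht, ht.1.2⟩
  have hIoo_sub : Ioo (sInf S) b ⊆ S := by
    intro t ht
    obtain ⟨s, hs, hst⟩ := exists_lt_of_csInf_lt hS ht.1
    have htI : t ∈ Ioo a b := ⟨haτ.trans_lt ht.1, ht.2⟩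
    exact ⟨htI, hs.2.trans_le (hg hs.1 htI hst.le)⟩
  refine ⟨sInf S, ⟨haτ, (csInf_le hbdd hS.some_mem).trans hS.some_mem.1.2.le⟩, ?_⟩
  exact (hS_sub.eventuallyLE.trans Ioo_ae_eq_Ico.symm.le).antisymm hIoo_sub.eventuallyLE

theorem integral_mul_nonneg_of_monotoneOn {h g : ℝ → ℝ} {a b M : ℝ} (hab : a ≤ b)
    (hh : IntegrableOn h (Ioo a b)) (htail : ∀ τ ∈ Icc a b, 0 ≤ ∫ t in Ioo τ b, h t)
    (hgm : Measurable g) (hg : MonotoneOn g (Ioo a b)) (hg_mem : ∀ t ∈ Ioo a b, g t ∈ Icc 0 M) :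
    0 ≤ ∫ t in Ioo a b, h t * g t := by
  -- layer cake: `g t = ∫ c in Ioo 0 M, 1{c < g t}`; each superlevel set of `g` is a.e. a tail
  set F : ℝ → ℝ → ℝ := fun t c => (Iio (g t)).indicator (fun _ => h t) c
  have hF : Integrable (Function.uncurry F)
      ((volume.restrict (Ioo a b)).prod (volume.restrict (Ioo 0 M))) :=
    (hh.comp_fst _).indicator (measurableSet_lt measurable_snd (hgm.comp measurable_fst))
  have hinner : ∫ t in Ioo a b, h t * g t = ∫ t in Ioo a b, ∫ c in Ioo 0 M, F t c :=
    setIntegral_congr_fun measurableSet_Ioo fun t ht => by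
      rw [setIntegral_indicator measurableSet_Iio, Ioo_inter_Iio, min_eq_right (hg_mem t ht).2,
        setIntegral_const, Real.volume_real_Ioo_of_le (hg_mem t ht).1, sub_zero, smul_eq_mul,
        mul_comm]
  rw [hinner, integral_integral_swap hF]
  refine integral_nonneg fun c => ?_
  obtain ⟨τ, hτ, hae⟩ := hg.exists_superlevel_ae_eq_Ioo hab c
  have hslice : ∫ t in Ioo a b, F t c = ∫ t in Ioo a b ∩ {t | c < g t}, h t := by
    rw [← setIntegral_indicator (measurableSet_lt measurable_const hgm)]
    rfl
  rw [hslice, setIntegral_congr_set hae]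
  exact htail τ hτ

lemma integral_Ioo_deriv_sub_nonneg {φ : ℝ → ℝ} {u τ : ℝ} (hφ : MonotoneOn φ (Icc 0 1))
    (hφ0 : φ 0 = 0) (hle : φ τ ≤ u * τ) (hint : ∫ t in (0:ℝ)..1, deriv φ t = u)
    (hτ : τ ∈ Icc (0:ℝ) 1) : 0 ≤ ∫ t in Ioo τ 1, (deriv φ t - u) := by
  have hφ_left : MonotoneOn φ (uIcc 0 τ) :=
    hφ.mono (by rw [uIcc_of_le hτ.1]; exact Icc_subset_Icc_right hτ.2)
  have hφ_right : MonotoneOn φ (uIcc τ 1) :=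
    hφ.mono (by rw [uIcc_of_le hτ.2]; exact Icc_subset_Icc_left hτ.1)
  have hhead : ∫ t in (0:ℝ)..τ, deriv φ t ≤ u * τ := by
    have h := hφ_left.intervalIntegral_deriv_mem_uIcc
    rw [hφ0, sub_zero, uIcc_of_le (hφ0 ▸ hφ ⟨le_rfl, zero_le_one⟩ hτ hτ.1)] at h
    exact h.2.trans hle
  have hsplit := intervalIntegral.integral_add_adjacent_intervals
    hφ_left.intervalIntegrable_deriv hφ_right.intervalIntegrable_deriv
  rw [← integral_Ioc_eq_integral_Ioo, ← intervalIntegral.integral_of_le hτ.2,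
    intervalIntegral.integral_sub hφ_right.intervalIntegrable_deriv intervalIntegrable_const,
    intervalIntegral.integral_const, smul_eq_mul]
  linarith

namespace IsCopula

variable {C : ℝ → ℝ → ℝ}

lemma swap (hC : IsCopula C) : IsCopula (fun u v => C v u) := by
  obtain ⟨hbot, hleft, hrect⟩ := hC
  refine ⟨hleft, hbot, fun u₁ u₂ v₁ v₂ hu₁ hu₂ hv₁ hv₂ hu hv => ?_⟩
  linarith [hrect v₁ v₂ u₁ u₂ hv₁ hv₂ hu₁ hu₂ hv hu]

lemma monotoneOn_right (hC : IsCopula C) {u : ℝ} (hu : u ∈ Icc (0:ℝ) 1) :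
    MonotoneOn (fun v => C u v) (Icc 0 1) := fun s hs t ht hst => by
  linarith [hC.2.2 0 u s t ⟨le_rfl, zero_le_one⟩ hu hs ht hu.1 hst, (hC.2.1 s hs).1,
    (hC.2.1 t ht).1]

lemma monotoneOn_sub_right (hC : IsCopula C) {u : ℝ} (hu : u ∈ Icc (0:ℝ) 1) :
    MonotoneOn (fun v => v - C u v) (Icc 0 1) := fun s hs t ht hst => by
  linarith [hC.2.2 u 1 s t hu ⟨zero_le_one, le_rfl⟩ hs ht hu.2 hst, (hC.2.1 s hs).2,
    (hC.2.1 t ht).2]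

lemma le_mul_of_convexOn (hC : IsCopula C) {u v : ℝ} (hu : u ∈ Icc (0:ℝ) 1)
    (hv : v ∈ Icc (0:ℝ) 1) (hconv : ConvexOn ℝ (Icc 0 1) (fun s => C s v)) : C u v ≤ u * v := by
  have h := hconv.2 (left_mem_Icc.2 zero_le_one) (right_mem_Icc.2 zero_le_one)
    (sub_nonneg.2 hu.2) hu.1 (sub_add_cancel 1 u)
  simpa only [smul_eq_mul, mul_zero, mul_one, zero_add, (hC.2.1 v hv).1, (hC.2.1 v hv).2] using h

lemma markovProduct_one_right {C₁ : ℝ → ℝ → ℝ} (hC : IsCopula C) (u : ℝ) :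
    MarkovProduct C₁ C u 1 = ∫ t in (0:ℝ)..1, deriv (fun s => C₁ u s) t := by
  simp only [MarkovProduct, intervalIntegral.integral_of_le zero_le_one,
    integral_Ioc_eq_integral_Ioo]
  refine setIntegral_congr_fun measurableSet_Ioo fun t ht => ?_
  have hid : (fun s => C s 1) =ᶠ[𝓝 t] id := by
    filter_upwards [Icc_mem_nhds ht.1 ht.2] with s hs using (hC.1 s hs).2
  simp only [hid.deriv_eq, deriv_id, mul_one]

lemma markovProduct_one_left {C₂ : ℝ → ℝ → ℝ} (hC : IsCopula C) (v : ℝ) :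
    MarkovProduct C C₂ 1 v = ∫ t in (0:ℝ)..1, deriv (fun s => C₂ s v) t := by
  simp only [MarkovProduct, intervalIntegral.integral_of_le zero_le_one,
    integral_Ioc_eq_integral_Ioo]
  refine setIntegral_congr_fun measurableSet_Ioo fun t ht => ?_
  have hid : (fun s => C 1 s) =ᶠ[𝓝 t] id := by
    filter_upwards [Icc_mem_nhds ht.1 ht.2] with s hs using (hC.2.1 s hs).2
  simp only [hid.deriv_eq, deriv_id, one_mul]

theorem mul_integral_deriv_le_markovProduct (hC : IsCopula C) {u v : ℝ}
    (hu : u ∈ Icc (0:ℝ) 1) (hv : v ∈ Icc (0:ℝ) 1) (hconv : ConvexOn ℝ (Icc 0 1) (fun s => C s v))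
    (hupper : ∀ τ ∈ Icc (0:ℝ) 1, C u τ ≤ u * τ)
    (hmarg : ∫ t in (0:ℝ)..1, deriv (fun s => C u s) t = u) :
    u * ∫ t in (0:ℝ)..1, deriv (fun s => C s v) t ≤ MarkovProduct C C u v := by
  set f := deriv (fun s => C u s)
  set g := deriv (fun s => C s v)
  -- the right derivative of the convex `fun s => C s v` is a nondecreasing version of `g`
  set r := fun t => derivWithin (fun s => C s v) (Ioi t) t
  have hf_int : IntegrableOn f (Ioo 0 1) :=
    (intervalIntegrable_iff_integrableOn_Ioo_of_le zero_le_one).1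
      ((hC.monotoneOn_right hu).mono (uIcc_of_le zero_le_one).subset).intervalIntegrable_deriv
  have hg_int : IntegrableOn g (Ioo 0 1) :=
    (intervalIntegrable_iff_integrableOn_Ioo_of_le zero_le_one).1
      ((hC.swap.monotoneOn_right hv).mono (uIcc_of_le zero_le_one).subset).intervalIntegrable_deriv
  have hfg_int : IntegrableOn (fun t => f t * g t) (Ioo 0 1) := by
    refine hg_int.bdd_mul (c := 1) hf_int.aestronglyMeasurable ?_
    filter_upwards [ae_restrict_mem measurableSet_Ioo] with t ht
    have hft := deriv_mem_Icc_of_monotoneOn (hC.monotoneOn_right hu) (hC.monotoneOn_sub_right hu)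
      (Icc_mem_nhds ht.1 ht.2)
    rw [Real.norm_eq_abs, abs_le]
    exact ⟨by linarith [hft.1], hft.2⟩
  have htail : ∀ τ ∈ Icc (0:ℝ) 1, 0 ≤ ∫ t in Ioo τ 1, (f t - u) := fun τ hτ =>
    integral_Ioo_deriv_sub_nonneg (hC.monotoneOn_right hu) (hC.1 u hu).1 (hupper τ hτ) hmarg hτ
  have hr_mono : MonotoneOn r (Ioo 0 1) :=
    interior_Icc (a := (0:ℝ)) (b := 1) ▸ hconv.monotoneOn_rightDeriv
  have hr_mem : ∀ t ∈ Ioo (0:ℝ) 1, r t ∈ Icc 0 1 := fun t ht =>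
    rightDeriv_mem_Icc_of_monotoneOn (hC.swap.monotoneOn_right hv) (hC.swap.monotoneOn_sub_right hv)
      (Icc_mem_nhds ht.1 ht.2)
  have hgr : g =ᵐ[volume.restrict (Ioo 0 1)] r :=
    ((hC.swap.monotoneOn_right hv).mono Ioo_subset_Icc_self).ae_deriv_eq_rightDeriv isOpen_Ioo
  have hkey : 0 ≤ ∫ t in Ioo 0 1, (f t - u) * r t :=
    integral_mul_nonneg_of_monotoneOn zero_le_one (hf_int.sub (integrableOn_const (by simp)))
      htail (measurable_derivWithin_Ioi _) hr_mono hr_mem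
  have hsplit : ∫ t in Ioo 0 1, (f t - u) * g t
      = MarkovProduct C C u v - u * ∫ t in (0:ℝ)..1, g t := by
    simp only [MarkovProduct, intervalIntegral.integral_of_le zero_le_one,
      integral_Ioc_eq_integral_Ioo, sub_mul]
    rw [integral_sub hfg_int (hg_int.const_mul u), integral_const_mul]
  have hgr' : ∫ t in Ioo 0 1, (f t - u) * g t = ∫ t in Ioo 0 1, (f t - u) * r t :=
    integral_congr_ae (hgr.mono fun t ht => congrArg ((f t - u) * ·) ht)
  linarith

end IsCopula

theorem idempotent_stochDecr_eq_pi (C : ℝ → ℝ → ℝ) (hC : IsCopula C)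
    (hid : ∀ u ∈ Icc (0:ℝ) 1, ∀ v ∈ Icc (0:ℝ) 1, MarkovProduct C C u v = C u v)
    (hSD : StochDecr C) :
    ∀ u ∈ Icc (0:ℝ) 1, ∀ v ∈ Icc (0:ℝ) 1, C u v = u * v := by
  intro u hu v hv
  have h1 : (1:ℝ) ∈ Icc (0:ℝ) 1 := right_mem_Icc.2 zero_le_one
  have hupper : ∀ a ∈ Icc (0:ℝ) 1, ∀ b ∈ Icc (0:ℝ) 1, C a b ≤ a * b := fun a ha b hb =>
    hC.le_mul_of_convexOn ha hb (hSD b hb)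
  have hmarg_u : ∫ t in (0:ℝ)..1, deriv (fun s => C u s) t = u := by
    rw [← hC.markovProduct_one_right, hid u hu 1 h1, (hC.1 u hu).2]
  have hmarg_v : ∫ t in (0:ℝ)..1, deriv (fun s => C s v) t = v := by
    rw [← hC.markovProduct_one_left, hid 1 h1 v hv, (hC.2.1 v hv).2]
  refine le_antisymm (hupper u hu v hv) ?_
  calc u * v = u * ∫ t in (0:ℝ)..1, deriv (fun s => C s v) t := by rw [hmarg_v]
    _ ≤ MarkovProduct C C u v :=
      hC.mul_integral_deriv_le_markovProduct hu hv (hSD v hv) (hupper u hu) hmarg_u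
    _ = C u v := hid u hu v hv
end
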